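/- For every integer n ≥ 1, the number of n×n alternating sign matrices equals the number of order ideals of the four-color tetrahedral poset T_n({b,y,o,g}). -/

import Mathlib

open scoped Classical

noncomputable section

/-- `V3 n` is the set `{(a,b,c) ∈ ℤ≥0³ : a + b + c ≤ n - 2}`. -/
def V3 (n : ℕ) : Finset (ℤ × ℤ × ℤ) :=
  ((Finset.Icc (0:ℤ) (n:ℤ) ×ˢ Finset.Icc (0:ℤ) (n:ℤ) ×ˢ Finset.Icc (0:ℤ) (n:ℤ)).filter
    (fun p => p.1 + p.2.1 + p.2.2 ≤ (n:ℤ) - 2))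

/-- The six edge vectors. -/
def vr : ℤ × ℤ × ℤ := (1,0,0)
def vg : ℤ × ℤ × ℤ := (0,1,0)
def vy : ℤ × ℤ × ℤ := (0,0,1)
def vb : ℤ × ℤ × ℤ := (-1,1,0)
def vo : ℤ × ℤ × ℤ := (-1,0,1)
def vs : ℤ × ℤ × ℤ := (0,1,-1)

/-- One step: add a vector of `S`, staying inside `W`. -/
def step3 (S : Set (ℤ × ℤ × ℤ)) (W : Finset (ℤ × ℤ × ℤ)) (u v : ℤ × ℤ × ℤ) : Prop :=
  u ∈ W ∧ v ∈ W ∧ ∃ e ∈ S, v = u + e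

/-- The order relation of `T_n(S)`: reflexive-transitive closure of `step3`,
restricted to `W`. -/
def le3 (S : Set (ℤ × ℤ × ℤ)) (W : Finset (ℤ × ℤ × ℤ)) (u v : ℤ × ℤ × ℤ) : Prop :=
  u ∈ W ∧ v ∈ W ∧ Relation.ReflTransGen (step3 S W) u v

/-- An order ideal: a downward closed subset of `W`. -/
def IsIdeal3 (S : Set (ℤ × ℤ × ℤ)) (W : Finset (ℤ × ℤ × ℤ))
    (I : Finset (ℤ × ℤ × ℤ)) : Prop :=
  I ⊆ W ∧ ∀ u v : ℤ × ℤ × ℤ, le3 S W u v → v ∈ I → u ∈ I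

/-- The set of all order ideals of `T_n(S)`. -/
def ideals3 (S : Set (ℤ × ℤ × ℤ)) (W : Finset (ℤ × ℤ × ℤ)) :
    Finset (Finset (ℤ × ℤ × ℤ)) :=
  W.powerset.filter (fun I => IsIdeal3 S W I)

/-- The rank generating function `F(J(T_n(S)),q) = Σ_{I} q^{|I|}`. -/
def genF3 (S : Set (ℤ × ℤ × ℤ)) (W : Finset (ℤ × ℤ × ℤ)) : Polynomial ℤ :=
  ∑ I ∈ ideals3 S W, Polynomial.X ^ I.card

/-- An `n × n` alternating sign matrix: entries in `{-1,0,1}`, all row and column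
sums equal to 1, and all partial row and column sums equal to 0 or 1. -/
def IsASM (n : ℕ) (A : Fin n → Fin n → ℤ) : Prop :=
  (∀ i j, A i j = -1 ∨ A i j = 0 ∨ A i j = 1) ∧
  (∀ i, ∑ j, A i j = 1) ∧
  (∀ j, ∑ i, A i j = 1) ∧
  (∀ i k, (∑ j ∈ Finset.Iic k, A i j) = 0 ∨ (∑ j ∈ Finset.Iic k, A i j) = 1) ∧
  (∀ j k, (∑ i ∈ Finset.Iic k, A i j) = 0 ∨ (∑ i ∈ Finset.Iic k, A i j) = 1)

end

section AuxDev

lemma mem_V3 {n : ℕ} {p : ℤ × ℤ × ℤ} :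
    p ∈ V3 n ↔ 0 ≤ p.1 ∧ 0 ≤ p.2.1 ∧ 0 ≤ p.2.2 ∧ p.1 + p.2.1 + p.2.2 ≤ (n:ℤ) - 2 := by
  simp only [V3, Finset.mem_filter, Finset.mem_product, Finset.mem_Icc]
  omega

lemma sum_if_lt_eq_Iic {n : ℕ} (m : ℕ) (hm : m < n) (h : Fin n → ℤ) :
    (∑ x : Fin n, if (((x:ℕ):ℤ) < (m:ℤ)+1) then h x else 0)
      = ∑ x ∈ Finset.Iic (⟨m, hm⟩ : Fin n), h x := by
  rw [← Finset.sum_filter]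
  congr 1
  ext x
  simp only [Finset.mem_filter, Finset.mem_univ, true_and, Finset.mem_Iic, Fin.le_def]
  omega

lemma sum_Iic_val {n : ℕ} (k : Fin n) (h : ℕ → ℤ) :
    ∑ y ∈ Finset.Iic k, h (y:ℕ) = ∑ m ∈ Finset.range ((k:ℕ)+1), h m := by
  have hk := k.isLt
  have h1 : Finset.Iic k = Finset.filter (fun y : Fin n => (y:ℕ) < (k:ℕ)+1) Finset.univ := by
    ext x
    simp only [Finset.mem_Iic, Finset.mem_filter, Finset.mem_univ, true_and, Fin.le_def]
    omega
  rw [h1, Finset.sum_filter, Fin.sum_univ_eq_sum_range (fun m => if m < (k:ℕ)+1 then h m else 0),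
    ← Finset.sum_filter]
  congr 1
  ext m
  simp only [Finset.mem_filter, Finset.mem_range]
  omega

lemma sum_Iic_tel {n : ℕ} (k : Fin n) (g : ℕ → ℤ) :
    ∑ y ∈ Finset.Iic k, (g ((y:ℕ)+1) - g (y:ℕ)) = g ((k:ℕ)+1) - g 0 := by
  have h1 := sum_Iic_val k (fun m => g (m+1) - g m)
  rw [h1, Finset.sum_range_sub]

def rowS {n : ℕ} (A : Fin n → Fin n → ℤ) (x : Fin n) (j : ℤ) : ℤ :=
  ∑ y : Fin n, if (((y:ℕ):ℤ) < j) then A x y else 0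

def DmZ {n : ℕ} (A : Fin n → Fin n → ℤ) (i j : ℤ) : ℤ :=
  ∑ x : Fin n, if (((x:ℕ):ℤ) < i) then rowS A x j else 0

lemma rowS_succ {n : ℕ} (A : Fin n → Fin n → ℤ) (x : Fin n) (y : ℕ) (hy : y < n) :
    rowS A x ((y:ℤ)+1) = rowS A x (y:ℤ) + A x ⟨y, hy⟩ := by
  unfold rowS
  have key : ∀ z : Fin n, (if (((z:ℕ):ℤ) < (y:ℤ)+1) then A x z else 0)
      = (if (((z:ℕ):ℤ) < (y:ℤ)) then A x z else 0) + (if z = ⟨y, hy⟩ then A x z else 0) := by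
    intro z
    by_cases h1 : (z:ℕ) < y
    · have hne : z ≠ ⟨y, hy⟩ := by simp only [ne_eq, Fin.ext_iff]; omega
      rw [if_pos (by omega), if_pos (by omega), if_neg hne]; ring
    by_cases h2 : (z:ℕ) = y
    · have he : z = ⟨y, hy⟩ := by simp only [Fin.ext_iff]; omega
      rw [if_pos (by omega), if_neg (by omega), if_pos he, he]; ring
    · have hne : z ≠ ⟨y, hy⟩ := by simp only [ne_eq, Fin.ext_iff]; omega
      rw [if_neg (by omega), if_neg (by omega), if_neg hne]; ring
  rw [Finset.sum_congr rfl (fun z _ => key z), Finset.sum_add_distrib,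
    Finset.sum_ite_eq' Finset.univ]
  simp

lemma DmZ_succ {n : ℕ} (A : Fin n → Fin n → ℤ) (i : ℕ) (hi : i < n) (j : ℤ) :
    DmZ A ((i:ℤ)+1) j = DmZ A (i:ℤ) j + rowS A ⟨i, hi⟩ j := by
  unfold DmZ
  have key : ∀ x : Fin n, (if (((x:ℕ):ℤ) < (i:ℤ)+1) then rowS A x j else 0)
      = (if (((x:ℕ):ℤ) < (i:ℤ)) then rowS A x j else 0)
        + (if x = ⟨i, hi⟩ then rowS A x j else 0) := by
    intro z
    by_cases h1 : (z:ℕ) < i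
    · have hne : z ≠ ⟨i, hi⟩ := by simp only [ne_eq, Fin.ext_iff]; omega
      rw [if_pos (by omega), if_pos (by omega), if_neg hne]; ring
    by_cases h2 : (z:ℕ) = i
    · have he : z = ⟨i, hi⟩ := by simp only [Fin.ext_iff]; omega
      rw [if_pos (by omega), if_neg (by omega), if_pos he, he]; ring
    · have hne : z ≠ ⟨i, hi⟩ := by simp only [ne_eq, Fin.ext_iff]; omega
      rw [if_neg (by omega), if_neg (by omega), if_neg hne]; ring
  rw [Finset.sum_congr rfl (fun x _ => key x), Finset.sum_add_distrib,
    Finset.sum_ite_eq' Finset.univ]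
  simp

lemma DmZ_colsucc {n : ℕ} (A : Fin n → Fin n → ℤ) (i : ℤ) (j : ℕ) (hj : j < n) :
    DmZ A i ((j:ℤ)+1) = DmZ A i (j:ℤ)
      + ∑ x : Fin n, (if (((x:ℕ):ℤ) < i) then A x ⟨j, hj⟩ else 0) := by
  unfold DmZ
  rw [← Finset.sum_add_distrib]
  refine Finset.sum_congr rfl fun x _ => ?_
  by_cases h : ((x:ℕ):ℤ) < i
  · rw [if_pos h, if_pos h, if_pos h, rowS_succ A x j hj]
  · rw [if_neg h, if_neg h, if_neg h]; ring

lemma DmZ_zero_left {n : ℕ} (A : Fin n → Fin n → ℤ) (j : ℤ) : DmZ A 0 j = 0 :=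
  Finset.sum_eq_zero fun x _ => if_neg (by omega)

lemma rowS_zero {n : ℕ} (A : Fin n → Fin n → ℤ) (x : Fin n) : rowS A x 0 = 0 :=
  Finset.sum_eq_zero fun y _ => if_neg (by omega)

lemma DmZ_zero_top {n : ℕ} (A : Fin n → Fin n → ℤ) (i : ℤ) : DmZ A i 0 = 0 := by
  unfold DmZ
  refine Finset.sum_eq_zero fun x _ => ?_
  rw [rowS_zero]
  simp

lemma rowS_full {n : ℕ} (A : Fin n → Fin n → ℤ) (x : Fin n) :
    rowS A x (n:ℤ) = ∑ y, A x y :=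
  Finset.sum_congr rfl fun y _ => if_pos (by exact_mod_cast y.isLt)

lemma matEntry {n : ℕ} (A : Fin n → Fin n → ℤ) (x y : Fin n) :
    A x y = DmZ A (((x:ℕ):ℤ)+1) (((y:ℕ):ℤ)+1) - DmZ A (((x:ℕ):ℤ)+1) ((y:ℕ):ℤ)
      - DmZ A ((x:ℕ):ℤ) (((y:ℕ):ℤ)+1) + DmZ A ((x:ℕ):ℤ) ((y:ℕ):ℤ) := by
  rw [DmZ_succ A x.1 x.isLt, DmZ_succ A x.1 x.isLt, rowS_succ A _ y.1 y.isLt]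
  simp only [Fin.eta]
  ring
structure Good (n : ℕ) (f : ℤ → ℤ → ℤ) : Prop where
  left : ∀ j, f 0 j = 0
  top : ∀ i, f i 0 = 0
  right : ∀ j, 0 ≤ j → j ≤ (n:ℤ) → f (n:ℤ) j = j
  bot : ∀ i, 0 ≤ i → i ≤ (n:ℤ) → f i (n:ℤ) = i
  monoI : ∀ i j, 0 ≤ i → i < (n:ℤ) → 0 ≤ j → j ≤ (n:ℤ) → f i j ≤ f (i+1) j
  stepI : ∀ i j, 0 ≤ i → i < (n:ℤ) → 0 ≤ j → j ≤ (n:ℤ) → f (i+1) j ≤ f i j + 1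
  monoJ : ∀ i j, 0 ≤ i → i ≤ (n:ℤ) → 0 ≤ j → j < (n:ℤ) → f i j ≤ f i (j+1)
  stepJ : ∀ i j, 0 ≤ i → i ≤ (n:ℤ) → 0 ≤ j → j < (n:ℤ) → f i (j+1) ≤ f i j + 1

lemma Good.chainJ {n : ℕ} {f : ℤ → ℤ → ℤ} (hf : Good n f) (i : ℤ) (hi : 0 ≤ i)
    (hin : i ≤ (n:ℤ)) :
    ∀ k, 0 ≤ k → ∀ j, 0 ≤ j → j + k ≤ (n:ℤ) → f i j ≤ f i (j+k) ∧ f i (j+k) ≤ f i j + k := by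
  intro k hk
  refine Int.le_induction (motive := fun k _ => ∀ j, 0 ≤ j → j + k ≤ (n:ℤ) →
    f i j ≤ f i (j+k) ∧ f i (j+k) ≤ f i j + k) ?_ ?_ k hk
  · intro j hj hjn; constructor <;> simp
  · intro k hk ih j hj hjn
    obtain ⟨h1, h2⟩ := ih j hj (by omega)
    have h3 := hf.monoJ i (j+k) (by omega) (by omega) (by omega) (by omega)
    have h4 := hf.stepJ i (j+k) (by omega) (by omega) (by omega) (by omega)
    have e : j + (k+1) = (j+k)+1 := by ring
    rw [e]
    omega

lemma Good.chainI {n : ℕ} {f : ℤ → ℤ → ℤ} (hf : Good n f) (j : ℤ) (hj : 0 ≤ j)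
    (hjn : j ≤ (n:ℤ)) :
    ∀ k, 0 ≤ k → ∀ i, 0 ≤ i → i + k ≤ (n:ℤ) → f i j ≤ f (i+k) j ∧ f (i+k) j ≤ f i j + k := by
  intro k hk
  refine Int.le_induction (motive := fun k _ => ∀ i, 0 ≤ i → i + k ≤ (n:ℤ) →
    f i j ≤ f (i+k) j ∧ f (i+k) j ≤ f i j + k) ?_ ?_ k hk
  · intro i hi hin; constructor <;> simp
  · intro k hk ih i hi hin
    obtain ⟨h1, h2⟩ := ih i hi (by omega)
    have h3 := hf.monoI (i+k) j (by omega) (by omega) (by omega) (by omega)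
    have h4 := hf.stepI (i+k) j (by omega) (by omega) (by omega) (by omega)
    have e : i + (k+1) = (i+k)+1 := by ring
    rw [e]
    omega

lemma Good.bounds {n : ℕ} {f : ℤ → ℤ → ℤ} (hf : Good n f) (i j : ℤ) (hi : 0 ≤ i)
    (hin : i ≤ (n:ℤ)) (hj : 0 ≤ j) (hjn : j ≤ (n:ℤ)) :
    0 ≤ f i j ∧ f i j ≤ i ∧ f i j ≤ j ∧ i + j - (n:ℤ) ≤ f i j := by
  have c1 := hf.chainJ i hi hin j hj 0 (by omega) (by omega)
  rw [zero_add, hf.top i] at c1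
  have c2 := hf.chainJ i hi hin ((n:ℤ)-j) (by omega) j hj (by omega)
  have e2 : j + ((n:ℤ)-j) = (n:ℤ) := by ring
  rw [e2, hf.bot i hi hin] at c2
  have c3 := hf.chainI j hj hjn i hi 0 (by omega) (by omega)
  rw [zero_add, hf.left j] at c3
  omega

lemma rowS01 {n : ℕ} {A : Fin n → Fin n → ℤ} (hA : IsASM n A) (x : Fin n) (j : ℤ)
    (hj : 0 ≤ j) (hjn : j ≤ (n:ℤ)) : 0 ≤ rowS A x j ∧ rowS A x j ≤ 1 := by
  obtain ⟨k, rfl⟩ : ∃ k : ℕ, (k:ℤ) = j := ⟨j.toNat, by omega⟩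
  cases k with
  | zero => rw [Nat.cast_zero, rowS_zero]; omega
  | succ k =>
    have hk : k < n := by exact_mod_cast (by omega : (k:ℤ) < (n:ℤ))
    have e : ((k+1:ℕ):ℤ) = (k:ℤ)+1 := by push_cast; ring
    rw [e]
    have : rowS A x ((k:ℤ)+1) = ∑ y ∈ Finset.Iic (⟨k, hk⟩ : Fin n), A x y :=
      sum_if_lt_eq_Iic k hk (fun y => A x y)
    rw [this]
    rcases hA.2.2.2.1 x ⟨k, hk⟩ with h | h <;> omega

lemma colS01 {n : ℕ} {A : Fin n → Fin n → ℤ} (hA : IsASM n A) (i : ℤ)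
    (hi : 0 ≤ i) (hin : i ≤ (n:ℤ)) (j : Fin n) :
    0 ≤ (∑ x : Fin n, if (((x:ℕ):ℤ) < i) then A x j else 0)
      ∧ (∑ x : Fin n, if (((x:ℕ):ℤ) < i) then A x j else 0) ≤ 1 := by
  obtain ⟨k, rfl⟩ : ∃ k : ℕ, (k:ℤ) = i := ⟨i.toNat, by omega⟩
  cases k with
  | zero =>
    rw [Nat.cast_zero]
    have : (∑ x : Fin n, if (((x:ℕ):ℤ) < 0) then A x j else 0) = 0 :=
      Finset.sum_eq_zero fun x _ => if_neg (by omega)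
    omega
  | succ k =>
    have hk : k < n := by exact_mod_cast (by omega : (k:ℤ) < (n:ℤ))
    have e : ((k+1:ℕ):ℤ) = (k:ℤ)+1 := by push_cast; ring
    rw [e]
    have : (∑ x : Fin n, if (((x:ℕ):ℤ) < (k:ℤ)+1) then A x j else 0)
        = ∑ x ∈ Finset.Iic (⟨k, hk⟩ : Fin n), A x j :=
      sum_if_lt_eq_Iic k hk (fun x => A x j)
    rw [this]
    rcases hA.2.2.2.2 j ⟨k, hk⟩ with h | h <;> omega

lemma good_DmZ {n : ℕ} {A : Fin n → Fin n → ℤ} (hA : IsASM n A) : Good n (DmZ A) := by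
  constructor
  · exact DmZ_zero_left A
  · exact DmZ_zero_top A
  · -- right
    intro j hj hjn
    obtain ⟨m, rfl⟩ : ∃ m : ℕ, (m:ℤ) = j := ⟨j.toNat, by omega⟩
    clear hj
    induction m with
    | zero => rw [Nat.cast_zero, DmZ_zero_top]
    | succ m ih =>
      have hm : m < n := by exact_mod_cast (by omega : (m:ℤ) < (n:ℤ))
      have e : ((m+1:ℕ):ℤ) = (m:ℤ)+1 := by push_cast; ring
      rw [e, DmZ_colsucc A (n:ℤ) m hm, ih (by omega)]
      have : (∑ x : Fin n, if (((x:ℕ):ℤ) < (n:ℤ)) then A x ⟨m, hm⟩ else 0)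
          = ∑ x, A x ⟨m, hm⟩ :=
        Finset.sum_congr rfl fun x _ => if_pos (by exact_mod_cast x.isLt)
      rw [this, hA.2.2.1 ⟨m, hm⟩]
  · -- bot
    intro i hi hin
    obtain ⟨m, rfl⟩ : ∃ m : ℕ, (m:ℤ) = i := ⟨i.toNat, by omega⟩
    clear hi
    induction m with
    | zero => rw [Nat.cast_zero, DmZ_zero_left]
    | succ m ih =>
      have hm : m < n := by exact_mod_cast (by omega : (m:ℤ) < (n:ℤ))
      have e : ((m+1:ℕ):ℤ) = (m:ℤ)+1 := by push_cast; ring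
      rw [e, DmZ_succ A m hm, ih (by omega), rowS_full, hA.2.1 ⟨m, hm⟩]
  · -- monoI
    intro i j hi hin hj hjn
    obtain ⟨m, hm, rfl⟩ : ∃ m : ℕ, m < n ∧ (m:ℤ) = i := ⟨i.toNat, by omega, by omega⟩
    rw [DmZ_succ A m hm j]
    have := rowS01 hA ⟨m, hm⟩ j hj hjn
    omega
  · -- stepI
    intro i j hi hin hj hjn
    obtain ⟨m, hm, rfl⟩ : ∃ m : ℕ, m < n ∧ (m:ℤ) = i := ⟨i.toNat, by omega, by omega⟩
    rw [DmZ_succ A m hm j]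
    have := rowS01 hA ⟨m, hm⟩ j hj hjn
    omega
  · -- monoJ
    intro i j hi hin hj hjn
    obtain ⟨m, hm, rfl⟩ : ∃ m : ℕ, m < n ∧ (m:ℤ) = j := ⟨j.toNat, by omega, by omega⟩
    rw [DmZ_colsucc A i m hm]
    have := colS01 hA i hi hin ⟨m, hm⟩
    omega
  · -- stepJ
    intro i j hi hin hj hjn
    obtain ⟨m, hm, rfl⟩ : ∃ m : ℕ, m < n ∧ (m:ℤ) = j := ⟨j.toNat, by omega, by omega⟩
    rw [DmZ_colsucc A i m hm]
    have := colS01 hA i hi hin ⟨m, hm⟩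
    omega
def matOf (n : ℕ) (f : ℤ → ℤ → ℤ) : Fin n → Fin n → ℤ :=
  fun x y => f (((x:ℕ):ℤ)+1) (((y:ℕ):ℤ)+1) - f (((x:ℕ):ℤ)+1) ((y:ℕ):ℤ)
    - f ((x:ℕ):ℤ) (((y:ℕ):ℤ)+1) + f ((x:ℕ):ℤ) ((y:ℕ):ℤ)

lemma matOf_rowp {n : ℕ} {f : ℤ → ℤ → ℤ} (hf : Good n f) (x : Fin n) (k : Fin n) :
    (∑ y ∈ Finset.Iic k, matOf n f x y)
      = f (((x:ℕ):ℤ)+1) (((k:ℕ):ℤ)+1) - f ((x:ℕ):ℤ) (((k:ℕ):ℤ)+1) := by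
  have e : ∀ y ∈ Finset.Iic k, matOf n f x y
      = (fun m : ℕ => f (((x:ℕ):ℤ)+1) (m:ℤ) - f ((x:ℕ):ℤ) (m:ℤ)) ((y:ℕ)+1)
        - (fun m : ℕ => f (((x:ℕ):ℤ)+1) (m:ℤ) - f ((x:ℕ):ℤ) (m:ℤ)) (y:ℕ) := by
    intro y _
    simp only [matOf]
    push_cast
    ring
  rw [Finset.sum_congr rfl e,
    sum_Iic_tel k (fun m : ℕ => f (((x:ℕ):ℤ)+1) (m:ℤ) - f ((x:ℕ):ℤ) (m:ℤ))]
  simp only [Nat.cast_zero, hf.top]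
  push_cast
  ring

lemma matOf_colp {n : ℕ} {f : ℤ → ℤ → ℤ} (hf : Good n f) (y : Fin n) (k : Fin n) :
    (∑ x ∈ Finset.Iic k, matOf n f x y)
      = f (((k:ℕ):ℤ)+1) (((y:ℕ):ℤ)+1) - f (((k:ℕ):ℤ)+1) ((y:ℕ):ℤ) := by
  have e : ∀ x ∈ Finset.Iic k, matOf n f x y
      = (fun m : ℕ => f (m:ℤ) (((y:ℕ):ℤ)+1) - f (m:ℤ) ((y:ℕ):ℤ)) ((x:ℕ)+1)
        - (fun m : ℕ => f (m:ℤ) (((y:ℕ):ℤ)+1) - f (m:ℤ) ((y:ℕ):ℤ)) (x:ℕ) := by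
    intro x _
    simp only [matOf]
    push_cast
    ring
  rw [Finset.sum_congr rfl e,
    sum_Iic_tel k (fun m : ℕ => f (m:ℤ) (((y:ℕ):ℤ)+1) - f (m:ℤ) ((y:ℕ):ℤ))]
  simp only [Nat.cast_zero, hf.left]
  push_cast
  ring

lemma isASM_matOf {n : ℕ} (hn : 1 ≤ n) {f : ℤ → ℤ → ℤ} (hf : Good n f) :
    IsASM n (matOf n f) := by
  have hIiclast : Finset.Iic (⟨n-1, by omega⟩ : Fin n) = Finset.univ := by
    ext z
    simp only [Finset.mem_Iic, Finset.mem_univ, iff_true, Fin.le_def]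
    have := z.isLt
    omega
  refine ⟨?_, ?_, ?_, ?_, ?_⟩
  · -- entries
    intro x y
    have hx := x.isLt
    have hy := y.isLt
    have h1 := hf.monoI ((x:ℕ):ℤ) (((y:ℕ):ℤ)+1) (by omega) (by omega) (by omega) (by omega)
    have h2 := hf.stepI ((x:ℕ):ℤ) (((y:ℕ):ℤ)+1) (by omega) (by omega) (by omega) (by omega)
    have h3 := hf.monoI ((x:ℕ):ℤ) ((y:ℕ):ℤ) (by omega) (by omega) (by omega) (by omega)
    have h4 := hf.stepI ((x:ℕ):ℤ) ((y:ℕ):ℤ) (by omega) (by omega) (by omega) (by omega)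
    simp only [matOf]
    omega
  · -- row sums
    intro x
    have : (∑ y, matOf n f x y) = ∑ y ∈ Finset.Iic (⟨n-1, by omega⟩ : Fin n), matOf n f x y := by
      rw [hIiclast]
    rw [this, matOf_rowp hf x ⟨n-1, by omega⟩]
    have hx := x.isLt
    have e : ((((⟨n-1, by omega⟩ : Fin n)):ℕ):ℤ)+1 = (n:ℤ) := by
      simp only []
      push_cast
      omega
    rw [e, hf.bot (((x:ℕ):ℤ)+1) (by omega) (by omega), hf.bot ((x:ℕ):ℤ) (by omega) (by omega)]
    ring
  · -- col sums
    intro y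
    have : (∑ x, matOf n f x y) = ∑ x ∈ Finset.Iic (⟨n-1, by omega⟩ : Fin n), matOf n f x y := by
      rw [hIiclast]
    rw [this, matOf_colp hf y ⟨n-1, by omega⟩]
    have hy := y.isLt
    have e : ((((⟨n-1, by omega⟩ : Fin n)):ℕ):ℤ)+1 = (n:ℤ) := by
      simp only []
      push_cast
      omega
    rw [e, hf.right (((y:ℕ):ℤ)+1) (by omega) (by omega), hf.right ((y:ℕ):ℤ) (by omega) (by omega)]
    ring
  · -- row partial sums
    intro x k
    rw [matOf_rowp hf x k]
    have hx := x.isLt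
    have hk := k.isLt
    have h1 := hf.monoI ((x:ℕ):ℤ) (((k:ℕ):ℤ)+1) (by omega) (by omega) (by omega) (by omega)
    have h2 := hf.stepI ((x:ℕ):ℤ) (((k:ℕ):ℤ)+1) (by omega) (by omega) (by omega) (by omega)
    omega
  · -- col partial sums
    intro y k
    rw [matOf_colp hf y k]
    have hy := y.isLt
    have hk := k.isLt
    have h1 := hf.monoJ (((k:ℕ):ℤ)+1) ((y:ℕ):ℤ) (by omega) (by omega) (by omega) (by omega)
    have h2 := hf.stepJ (((k:ℕ):ℤ)+1) ((y:ℕ):ℤ) (by omega) (by omega) (by omega) (by omega)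
    omega

lemma rowS_matOf {n : ℕ} {f : ℤ → ℤ → ℤ} (hf : Good n f) (x : Fin n) (j : ℕ) (hj : j ≤ n) :
    rowS (matOf n f) x (j:ℤ) = f (((x:ℕ):ℤ)+1) (j:ℤ) - f ((x:ℕ):ℤ) (j:ℤ) := by
  induction j with
  | zero =>
    rw [Nat.cast_zero, rowS_zero]
    simp [hf.top]
  | succ j ih =>
    have hjn : j < n := by omega
    have e : ((j+1:ℕ):ℤ) = (j:ℤ)+1 := by push_cast; ring
    rw [e, rowS_succ _ x j hjn, ih (by omega)]
    simp only [matOf]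
    push_cast
    ring

lemma DmZ_matOf {n : ℕ} {f : ℤ → ℤ → ℤ} (hf : Good n f) (i : ℕ) (hi : i ≤ n)
    (j : ℕ) (hj : j ≤ n) : DmZ (matOf n f) (i:ℤ) (j:ℤ) = f (i:ℤ) (j:ℤ) := by
  induction i with
  | zero => rw [Nat.cast_zero, DmZ_zero_left, hf.left]
  | succ i ih =>
    have hin : i < n := by omega
    have e : ((i+1:ℕ):ℤ) = (i:ℤ)+1 := by push_cast; ring
    rw [e, DmZ_succ _ i hin, ih (by omega), rowS_matOf hf ⟨i, hin⟩ j hj]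
    simp only []
    ring
lemma mem_V3_mk {n : ℕ} {a b c : ℤ} :
    ((a, b, c) : ℤ×ℤ×ℤ) ∈ V3 n ↔ 0 ≤ a ∧ 0 ≤ b ∧ 0 ≤ c ∧ a + b + c ≤ (n:ℤ) - 2 :=
  mem_V3

lemma seg_card {N : Finset ℤ} {m : ℤ} (hsub : N ⊆ Finset.Icc 0 m)
    (hdc : ∀ a ∈ N, ∀ b, 0 ≤ b → b ≤ a → b ∈ N) (a : ℤ) :
    a ∈ N ↔ 0 ≤ a ∧ a < (N.card : ℤ) := by
  constructor
  · intro ha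
    have h0 : 0 ≤ a := (Finset.mem_Icc.mp (hsub ha)).1
    refine ⟨h0, ?_⟩
    have hs : Finset.Icc 0 a ⊆ N := fun b hb =>
      hdc a ha b (Finset.mem_Icc.mp hb).1 (Finset.mem_Icc.mp hb).2
    have := Finset.card_le_card hs
    rw [Int.card_Icc] at this
    omega
  · rintro ⟨h0, hcard⟩
    by_contra hna
    have hsub2 : N ⊆ Finset.Icc 0 (a-1) := by
      intro x hx
      have hx' := Finset.mem_Icc.mp (hsub hx)
      rw [Finset.mem_Icc]
      refine ⟨hx'.1, ?_⟩
      by_contra hgt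
      exact hna (hdc x hx a h0 (by omega))
    have := Finset.card_le_card hsub2
    rw [Int.card_Icc] at this
    omega

def pt (i j a : ℤ) : ℤ × ℤ × ℤ := (a, j - 1 - a, i - 1 - a)

noncomputable def NI (I : Finset (ℤ×ℤ×ℤ)) (i j : ℤ) : Finset ℤ :=
  (Finset.Icc 0 (min i j - 1)).filter (fun a => pt i j a ∉ I)

noncomputable def DI (I : Finset (ℤ×ℤ×ℤ)) (i j : ℤ) : ℤ := ((NI I i j).card : ℤ)

lemma ideal_single {n : ℕ} {S : Set (ℤ×ℤ×ℤ)} {I : Finset (ℤ×ℤ×ℤ)}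
    (hid : IsIdeal3 S (V3 n) I) {u v e : ℤ×ℤ×ℤ}
    (he : e ∈ S) (hu : u ∈ V3 n) (hv : v ∈ I) (heq : v = u + e) : u ∈ I :=
  hid.2 u v ⟨hu, hid.1 hv, Relation.ReflTransGen.single ⟨hu, hid.1 hv, e, he, heq⟩⟩ hv

lemma pt_up {n : ℕ} {I : Finset (ℤ×ℤ×ℤ)} (hsub : I ⊆ V3 n)
    (hid : IsIdeal3 ({vb,vy,vo,vg} : Set (ℤ×ℤ×ℤ)) (V3 n) I) (i j : ℤ) :
    ∀ k : ℕ, ∀ b : ℤ, 0 ≤ b → b + k ≤ min i j - 1 → pt i j b ∈ I → pt i j (b + k) ∈ I := by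
  intro k
  induction k with
  | zero => intro b hb hle h; simpa using h
  | succ k ih =>
    intro b hb hle h
    have hk1 : b + ((k+1:ℕ):ℤ) = (b + (k:ℤ)) + 1 := by push_cast; ring
    rw [hk1]
    set s : ℤ := b + (k:ℤ) with hs
    have h1 : pt i j s ∈ I := ih b hb (by push_cast at hle ⊢; omega) h
    have hV := mem_V3_mk.mp (show ((s, j-1-s, i-1-s) : ℤ×ℤ×ℤ) ∈ V3 n from hsub h1)
    have hsle : s + 1 ≤ min i j - 1 := by push_cast at hle; omega
    have huV : pt i j (s+1) ∈ V3 n := by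
      show ((s+1, j-1-(s+1), i-1-(s+1)) : ℤ×ℤ×ℤ) ∈ V3 n
      rw [mem_V3_mk]
      omega
    have hwV : ((s, j-1-s, i-2-s) : ℤ×ℤ×ℤ) ∈ V3 n := by
      rw [mem_V3_mk]
      omega
    have he1 : ((s, j-1-s, i-2-s) : ℤ×ℤ×ℤ) = pt i j (s+1) + vb := by
      simp only [pt, vb, Prod.mk_add_mk, Prod.mk.injEq]
      refine ⟨by ring, by ring, by ring⟩
    have he2 : pt i j s = ((s, j-1-s, i-2-s) : ℤ×ℤ×ℤ) + vy := by
      simp only [pt, vy, Prod.mk_add_mk, Prod.mk.injEq]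
      refine ⟨by ring, by ring, by ring⟩
    exact hid.2 _ _ ⟨huV, hsub h1,
      Relation.ReflTransGen.head ⟨huV, hwV, vb, by simp, he1⟩
        (Relation.ReflTransGen.single ⟨hwV, hsub h1, vy, by simp, he2⟩)⟩ h1

lemma NI_dc {n : ℕ} {I : Finset (ℤ×ℤ×ℤ)} (hsub : I ⊆ V3 n)
    (hid : IsIdeal3 ({vb,vy,vo,vg} : Set (ℤ×ℤ×ℤ)) (V3 n) I) (i j : ℤ) :
    ∀ a ∈ NI I i j, ∀ b, 0 ≤ b → b ≤ a → b ∈ NI I i j := by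
  intro a ha b hb hba
  simp only [NI, Finset.mem_filter, Finset.mem_Icc] at ha ⊢
  refine ⟨⟨hb, by omega⟩, ?_⟩
  intro hbI
  apply ha.2
  have := pt_up hsub hid i j (a - b).toNat b hb (by omega) hbI
  rwa [show b + ((a-b).toNat : ℤ) = a by omega] at this

lemma memNI_iff {n : ℕ} {I : Finset (ℤ×ℤ×ℤ)} (hsub : I ⊆ V3 n)
    (hid : IsIdeal3 ({vb,vy,vo,vg} : Set (ℤ×ℤ×ℤ)) (V3 n) I) (i j a : ℤ) :
    a ∈ NI I i j ↔ 0 ≤ a ∧ a < DI I i j := by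
  unfold DI
  exact seg_card (by unfold NI; exact Finset.filter_subset _ _) (NI_dc hsub hid i j) a

lemma good_DI {n : ℕ} {I : Finset (ℤ×ℤ×ℤ)}
    (hI : I ∈ ideals3 ({vb,vy,vo,vg} : Set (ℤ×ℤ×ℤ)) (V3 n)) : Good n (DI I) := by
  have hsub : I ⊆ V3 n := Finset.mem_powerset.mp (Finset.mem_filter.mp hI).1
  have hid : IsIdeal3 ({vb,vy,vo,vg} : Set (ℤ×ℤ×ℤ)) (V3 n) I := (Finset.mem_filter.mp hI).2
  constructor
  · intro j
    have h : Finset.Icc (0:ℤ) (min 0 j - 1) = ∅ := Finset.Icc_eq_empty (by omega)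
    simp [DI, NI, h]
  · intro i
    have h : Finset.Icc (0:ℤ) (min i 0 - 1) = ∅ := Finset.Icc_eq_empty (by omega)
    simp [DI, NI, h]
  · -- right
    intro j hj hjn
    have hall : ∀ a ∈ Finset.Icc (0:ℤ) (min (n:ℤ) j - 1), pt (n:ℤ) j a ∉ I := by
      intro a ha hmem
      rw [Finset.mem_Icc] at ha
      have hV := mem_V3_mk.mp (show ((a, j-1-a, (n:ℤ)-1-a) : ℤ×ℤ×ℤ) ∈ V3 n from hsub hmem)
      omega
    rw [DI, NI, Finset.filter_true_of_mem hall, Int.card_Icc]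
    omega
  · -- bot
    intro i hi hin
    have hall : ∀ a ∈ Finset.Icc (0:ℤ) (min i (n:ℤ) - 1), pt i (n:ℤ) a ∉ I := by
      intro a ha hmem
      rw [Finset.mem_Icc] at ha
      have hV := mem_V3_mk.mp (show ((a, (n:ℤ)-1-a, i-1-a) : ℤ×ℤ×ℤ) ∈ V3 n from hsub hmem)
      omega
    rw [DI, NI, Finset.filter_true_of_mem hall, Int.card_Icc]
    omega
  · -- monoI (via vy)
    intro i j hi hin hj hjn
    have hss : NI I i j ⊆ NI I (i+1) j := by
      intro a ha
      simp only [NI, Finset.mem_filter, Finset.mem_Icc] at ha ⊢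
      refine ⟨⟨ha.1.1, by omega⟩, ?_⟩
      intro hmem
      apply ha.2
      have hV := mem_V3_mk.mp (show ((a, j-1-a, (i+1)-1-a) : ℤ×ℤ×ℤ) ∈ V3 n from hsub hmem)
      have huV : pt i j a ∈ V3 n := by
        show ((a, j-1-a, i-1-a) : ℤ×ℤ×ℤ) ∈ V3 n
        rw [mem_V3_mk]
        omega
      exact ideal_single hid (by simp : vy ∈ ({vb,vy,vo,vg} : Set (ℤ×ℤ×ℤ))) huV hmem
        (by simp only [pt, vy, Prod.mk_add_mk, Prod.mk.injEq]
            refine ⟨by ring, by ring, by ring⟩)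
    have := Finset.card_le_card hss
    unfold DI
    exact_mod_cast this
  · -- stepI (via vb)
    intro i j hi hin hj hjn
    by_contra hcon
    push_neg at hcon
    have hd0 : (0:ℤ) ≤ DI I i j := Int.natCast_nonneg _
    have hmem1 : DI I i j + 1 ∈ NI I (i+1) j :=
      (memNI_iff hsub hid (i+1) j _).mpr ⟨by omega, by omega⟩
    have h1 := Finset.mem_filter.mp hmem1
    have hIcc1 := Finset.mem_Icc.mp h1.1
    have hnot1 : pt (i+1) j (DI I i j + 1) ∉ I := h1.2
    have hptd : pt i j (DI I i j) ∈ I := by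
      by_contra hno
      have hm : DI I i j ∈ NI I i j :=
        Finset.mem_filter.mpr ⟨Finset.mem_Icc.mpr ⟨hd0, by omega⟩, hno⟩
      have := (memNI_iff hsub hid i j _).mp hm
      omega
    apply hnot1
    have hV := mem_V3_mk.mp
      (show ((DI I i j, j-1-DI I i j, i-1-DI I i j) : ℤ×ℤ×ℤ) ∈ V3 n from hsub hptd)
    have huV : pt (i+1) j (DI I i j + 1) ∈ V3 n := by
      show ((DI I i j + 1, j-1-(DI I i j+1), (i+1)-1-(DI I i j+1)) : ℤ×ℤ×ℤ) ∈ V3 n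
      rw [mem_V3_mk]
      omega
    exact ideal_single hid (by simp : vb ∈ ({vb,vy,vo,vg} : Set (ℤ×ℤ×ℤ))) huV hptd
      (by simp only [pt, vb, Prod.mk_add_mk, Prod.mk.injEq]
          refine ⟨by ring, by ring, by ring⟩)
  · -- monoJ (via vg)
    intro i j hi hin hj hjn
    have hss : NI I i j ⊆ NI I i (j+1) := by
      intro a ha
      simp only [NI, Finset.mem_filter, Finset.mem_Icc] at ha ⊢
      refine ⟨⟨ha.1.1, by omega⟩, ?_⟩
      intro hmem
      apply ha.2
      have hV := mem_V3_mk.mp (show ((a, (j+1)-1-a, i-1-a) : ℤ×ℤ×ℤ) ∈ V3 n from hsub hmem)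
      have huV : pt i j a ∈ V3 n := by
        show ((a, j-1-a, i-1-a) : ℤ×ℤ×ℤ) ∈ V3 n
        rw [mem_V3_mk]
        omega
      exact ideal_single hid (by simp : vg ∈ ({vb,vy,vo,vg} : Set (ℤ×ℤ×ℤ))) huV hmem
        (by simp only [pt, vg, Prod.mk_add_mk, Prod.mk.injEq]
            refine ⟨by ring, by ring, by ring⟩)
    have := Finset.card_le_card hss
    unfold DI
    exact_mod_cast this
  · -- stepJ (via vo)
    intro i j hi hin hj hjn
    by_contra hcon
    push_neg at hcon
    have hd0 : (0:ℤ) ≤ DI I i j := Int.natCast_nonneg _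
    have hmem1 : DI I i j + 1 ∈ NI I i (j+1) :=
      (memNI_iff hsub hid i (j+1) _).mpr ⟨by omega, by omega⟩
    have h1 := Finset.mem_filter.mp hmem1
    have hIcc1 := Finset.mem_Icc.mp h1.1
    have hnot1 : pt i (j+1) (DI I i j + 1) ∉ I := h1.2
    have hptd : pt i j (DI I i j) ∈ I := by
      by_contra hno
      have hm : DI I i j ∈ NI I i j :=
        Finset.mem_filter.mpr ⟨Finset.mem_Icc.mpr ⟨hd0, by omega⟩, hno⟩
      have := (memNI_iff hsub hid i j _).mp hm
      omega
    apply hnot1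
    have hV := mem_V3_mk.mp
      (show ((DI I i j, j-1-DI I i j, i-1-DI I i j) : ℤ×ℤ×ℤ) ∈ V3 n from hsub hptd)
    have huV : pt i (j+1) (DI I i j + 1) ∈ V3 n := by
      show ((DI I i j + 1, (j+1)-1-(DI I i j+1), i-1-(DI I i j+1)) : ℤ×ℤ×ℤ) ∈ V3 n
      rw [mem_V3_mk]
      omega
    exact ideal_single hid (by simp : vo ∈ ({vb,vy,vo,vg} : Set (ℤ×ℤ×ℤ))) huV hptd
      (by simp only [pt, vo, Prod.mk_add_mk, Prod.mk.injEq]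
          refine ⟨by ring, by ring, by ring⟩)
noncomputable def idealOf (n : ℕ) (f : ℤ → ℤ → ℤ) : Finset (ℤ×ℤ×ℤ) :=
  (V3 n).filter (fun p => f (p.1 + p.2.2 + 1) (p.1 + p.2.1 + 1) ≤ p.1)

lemma step_back {n : ℕ} {f : ℤ → ℤ → ℤ} (hf : Good n f) {u w : ℤ×ℤ×ℤ}
    (h : step3 ({vb,vy,vo,vg} : Set (ℤ×ℤ×ℤ)) (V3 n) u w) (hw : w ∈ idealOf n f) :
    u ∈ idealOf n f := by
  obtain ⟨hu, hwV, e, he, rfl⟩ := h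
  obtain ⟨a, b, c⟩ := u
  have huV := mem_V3_mk.mp hu
  have hwle := (Finset.mem_filter.mp hw).2
  rw [idealOf, Finset.mem_filter]
  refine ⟨hu, ?_⟩
  show f (a + c + 1) (a + b + 1) ≤ a
  simp only [Set.mem_insert_iff, Set.mem_singleton_iff] at he
  rcases he with rfl | rfl | rfl | rfl
  · -- vb
    have hww := mem_V3_mk.mp (show ((a + -1, b + 1, c + 0) : ℤ×ℤ×ℤ) ∈ V3 n from hwV)
    have hwle' : f ((a + -1) + (c + 0) + 1) ((a + -1) + (b + 1) + 1) ≤ a + -1 := hwle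
    rw [show (a + -1) + (c + 0) + 1 = a + c from by ring,
        show (a + -1) + (b + 1) + 1 = a + b + 1 from by ring] at hwle'
    have hs := hf.stepI (a + c) (a + b + 1) (by omega) (by omega) (by omega) (by omega)
    omega
  · -- vy
    have hww := mem_V3_mk.mp (show ((a + 0, b + 0, c + 1) : ℤ×ℤ×ℤ) ∈ V3 n from hwV)
    have hwle' : f ((a + 0) + (c + 1) + 1) ((a + 0) + (b + 0) + 1) ≤ a + 0 := hwle
    rw [show (a + 0) + (c + 1) + 1 = a + c + 2 from by ring,
        show (a + 0) + (b + 0) + 1 = a + b + 1 from by ring] at hwle'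
    have hs := hf.monoI (a + c + 1) (a + b + 1) (by omega) (by omega) (by omega) (by omega)
    rw [show (a + c + 1) + 1 = a + c + 2 from by ring] at hs
    omega
  · -- vo
    have hww := mem_V3_mk.mp (show ((a + -1, b + 0, c + 1) : ℤ×ℤ×ℤ) ∈ V3 n from hwV)
    have hwle' : f ((a + -1) + (c + 1) + 1) ((a + -1) + (b + 0) + 1) ≤ a + -1 := hwle
    rw [show (a + -1) + (c + 1) + 1 = a + c + 1 from by ring,
        show (a + -1) + (b + 0) + 1 = a + b from by ring] at hwle'
    have hs := hf.stepJ (a + c + 1) (a + b) (by omega) (by omega) (by omega) (by omega)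
    rw [show (a + b) + 1 = a + b + 1 from rfl] at hs
    omega
  · -- vg
    have hww := mem_V3_mk.mp (show ((a + 0, b + 1, c + 0) : ℤ×ℤ×ℤ) ∈ V3 n from hwV)
    have hwle' : f ((a + 0) + (c + 0) + 1) ((a + 0) + (b + 1) + 1) ≤ a + 0 := hwle
    rw [show (a + 0) + (c + 0) + 1 = a + c + 1 from by ring,
        show (a + 0) + (b + 1) + 1 = a + b + 2 from by ring] at hwle'
    have hs := hf.monoJ (a + c + 1) (a + b + 1) (by omega) (by omega) (by omega) (by omega)
    rw [show (a + b + 1) + 1 = a + b + 2 from by ring] at hs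
    omega

lemma idealOf_mem {n : ℕ} {f : ℤ → ℤ → ℤ} (hf : Good n f) :
    idealOf n f ∈ ideals3 ({vb,vy,vo,vg} : Set (ℤ×ℤ×ℤ)) (V3 n) := by
  rw [ideals3, Finset.mem_filter, Finset.mem_powerset]
  refine ⟨Finset.filter_subset _ _, Finset.filter_subset _ _, ?_⟩
  intro u v hle hv
  obtain ⟨hu, hvW, hrtg⟩ := hle
  clear hu hvW
  induction hrtg using Relation.ReflTransGen.head_induction_on with
  | refl => exact hv
  | head hstep _ ih => exact step_back hf hstep ih

lemma DI_idealOf {n : ℕ} {f : ℤ → ℤ → ℤ} (hf : Good n f) (i j : ℤ) (hi : 0 ≤ i)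
    (hin : i ≤ (n:ℤ)) (hj : 0 ≤ j) (hjn : j ≤ (n:ℤ)) : DI (idealOf n f) i j = f i j := by
  obtain ⟨hb0, hbi, hbj, hbn⟩ := hf.bounds i j hi hin hj hjn
  have hNI : NI (idealOf n f) i j = Finset.Icc 0 (f i j - 1) := by
    ext a
    simp only [NI, Finset.mem_filter, Finset.mem_Icc]
    constructor
    · rintro ⟨⟨ha0, ham⟩, hnot⟩
      refine ⟨ha0, ?_⟩
      by_contra hcon
      push_neg at hcon
      apply hnot
      rw [idealOf, Finset.mem_filter]
      constructor
      · show ((a, j-1-a, i-1-a) : ℤ×ℤ×ℤ) ∈ V3 n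
        rw [mem_V3_mk]
        omega
      · show f (a + (i-1-a) + 1) (a + (j-1-a) + 1) ≤ a
        rw [show a + (i-1-a) + 1 = i from by ring, show a + (j-1-a) + 1 = j from by ring]
        omega
    · rintro ⟨ha0, haf⟩
      refine ⟨⟨ha0, by omega⟩, ?_⟩
      rw [idealOf, Finset.mem_filter]
      rintro ⟨hV, hle⟩
      have hle' : f (a + (i-1-a) + 1) (a + (j-1-a) + 1) ≤ a := hle
      rw [show a + (i-1-a) + 1 = i from by ring, show a + (j-1-a) + 1 = j from by ring] at hle'
      omega
  rw [DI, hNI, Int.card_Icc]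
  omega

lemma idealOf_congr {n : ℕ} {f f' : ℤ → ℤ → ℤ}
    (h : ∀ i j, 0 ≤ i → i ≤ (n:ℤ) → 0 ≤ j → j ≤ (n:ℤ) → f i j = f' i j) :
    idealOf n f = idealOf n f' := by
  unfold idealOf
  apply Finset.filter_congr
  intro p hp
  obtain ⟨a, b, c⟩ := p
  have hV := mem_V3_mk.mp hp
  show f (a + c + 1) (a + b + 1) ≤ a ↔ f' (a + c + 1) (a + b + 1) ≤ a
  rw [h (a + c + 1) (a + b + 1) (by omega) (by omega) (by omega) (by omega)]

lemma idealOf_DI {n : ℕ} {I : Finset (ℤ×ℤ×ℤ)}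
    (hI : I ∈ ideals3 ({vb,vy,vo,vg} : Set (ℤ×ℤ×ℤ)) (V3 n)) : idealOf n (DI I) = I := by
  have hsub : I ⊆ V3 n := Finset.mem_powerset.mp (Finset.mem_filter.mp hI).1
  have hid : IsIdeal3 ({vb,vy,vo,vg} : Set (ℤ×ℤ×ℤ)) (V3 n) I := (Finset.mem_filter.mp hI).2
  ext p
  obtain ⟨a, b, c⟩ := p
  rw [idealOf, Finset.mem_filter]
  constructor
  · rintro ⟨hV, hle⟩
    have hV' := mem_V3_mk.mp hV
    have hle' : DI I (a + c + 1) (a + b + 1) ≤ a := hle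
    have hnot : a ∉ NI I (a+c+1) (a+b+1) := by
      intro hmem
      have := (memNI_iff hsub hid _ _ _).mp hmem
      omega
    by_contra hnI
    apply hnot
    simp only [NI, Finset.mem_filter, Finset.mem_Icc]
    refine ⟨⟨by omega, by omega⟩, ?_⟩
    intro hptI
    apply hnI
    have e : pt (a+c+1) (a+b+1) a = (a, b, c) := by
      simp only [pt, Prod.mk.injEq]
      refine ⟨trivial, by ring, by ring⟩
    rwa [e] at hptI
  · intro hpI
    have hV := hsub hpI
    refine ⟨hV, ?_⟩
    have hV' := mem_V3_mk.mp hV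
    show DI I (a + c + 1) (a + b + 1) ≤ a
    by_contra hcon
    push_neg at hcon
    have hmem : a ∈ NI I (a+c+1) (a+b+1) :=
      (memNI_iff hsub hid _ _ _).mpr ⟨by omega, hcon⟩
    have hnpt := (Finset.mem_filter.mp hmem).2
    apply hnpt
    have e : pt (a+c+1) (a+b+1) a = (a, b, c) := by
      simp only [pt, Prod.mk.injEq]
      refine ⟨trivial, by ring, by ring⟩
    rwa [e]

end AuxDev

/-- The number of `n × n` alternating sign matrices equals the number of order
ideals of `T_n({b,y,o,g})`. -/
theorem stmt12 (n : ℕ) (hn : 1 ≤ n) :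
    Nat.card {A : Fin n → Fin n → ℤ // IsASM n A} =
      (ideals3 {vb, vy, vo, vg} (V3 n)).card := by
  have key : Nat.card {A : Fin n → Fin n → ℤ // IsASM n A}
      = Nat.card {I // I ∈ ideals3 ({vb,vy,vo,vg} : Set (ℤ×ℤ×ℤ)) (V3 n)} := by
    apply Nat.card_eq_of_bijective
      (fun A : {A : Fin n → Fin n → ℤ // IsASM n A} =>
        (⟨idealOf n (DmZ A.1), idealOf_mem (good_DmZ A.2)⟩ :
          {I // I ∈ ideals3 ({vb,vy,vo,vg} : Set (ℤ×ℤ×ℤ)) (V3 n)}))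
    constructor
    · rintro ⟨A, hA⟩ ⟨A', hA'⟩ h
      simp only [Subtype.mk.injEq] at h
      have hD : ∀ i j : ℤ, 0 ≤ i → i ≤ (n:ℤ) → 0 ≤ j → j ≤ (n:ℤ) → DmZ A i j = DmZ A' i j := by
        intro i j hi hin hj hjn
        rw [← DI_idealOf (good_DmZ hA) i j hi hin hj hjn,
          ← DI_idealOf (good_DmZ hA') i j hi hin hj hjn, h]
      refine Subtype.ext ?_
      funext x y
      have hx := x.isLt
      have hy := y.isLt
      show A x y = A' x y
      rw [matEntry A x y, matEntry A' x y,
        hD (((x:ℕ):ℤ)+1) (((y:ℕ):ℤ)+1) (by omega) (by omega) (by omega) (by omega),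
        hD (((x:ℕ):ℤ)+1) ((y:ℕ):ℤ) (by omega) (by omega) (by omega) (by omega),
        hD ((x:ℕ):ℤ) (((y:ℕ):ℤ)+1) (by omega) (by omega) (by omega) (by omega),
        hD ((x:ℕ):ℤ) ((y:ℕ):ℤ) (by omega) (by omega) (by omega) (by omega)]
    · rintro ⟨I, hI⟩
      have hG := good_DI hI
      refine ⟨⟨matOf n (DI I), isASM_matOf hn hG⟩, ?_⟩
      simp only [Subtype.mk.injEq]
      have h1 : idealOf n (DmZ (matOf n (DI I))) = idealOf n (DI I) := by
        apply idealOf_congr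
        intro i j hi hin hj hjn
        obtain ⟨i', rfl⟩ : ∃ m : ℕ, (m:ℤ) = i := ⟨i.toNat, by omega⟩
        obtain ⟨j', rfl⟩ : ∃ m : ℕ, (m:ℤ) = j := ⟨j.toNat, by omega⟩
        exact DmZ_matOf hG i' (by omega) j' (by omega)
      rw [h1, idealOf_DI hI]
  rw [key]
  exact Nat.card_eq_finsetCard _
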